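/- Suppose n ≥ 1, n·p_l < k ≤ n·ε, and p_l^k (1−p_l)^(n−k) ≥ ε^k (1−ε)^(n−k), and let ε < p ≤ 1. Then the infimum, over all feasible priors μ, of the posterior confidence P(μ,p) equals θ·f(ε) / (θ·f(ε) + (1−θ)·f(p)). -/

import Mathlib

open MeasureTheory Set

/-- The Bernoulli likelihood of observing `k` failures in `n` trials. -/
noncomputable def likelihood (k n : ℕ) (x : ℝ) : ℝ := x ^ k * (1 - x) ^ (n - k)

/-- A prior (probability measure on `[0,1]`) is feasible if it assigns mass `θ`
to `[0, ε]` and full mass to `[p_l, 1]`. -/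
def Feasible (pl ε θ : ℝ) (μ : Measure ℝ) : Prop :=
  IsProbabilityMeasure μ ∧ μ (Icc 0 ε) = ENNReal.ofReal θ ∧ μ (Icc pl 1) = 1

/-- The posterior confidence `P(μ, p)` in the bound `p` after observing
`k` failures in `n` miles, with prior `μ`. -/
noncomputable def posterior (k n : ℕ) (μ : Measure ℝ) (p : ℝ) : ℝ :=
  (∫ x in Icc (0 : ℝ) p, likelihood k n x ∂μ) /
    (∫ x in Icc (0 : ℝ) 1, likelihood k n x ∂μ)

/-! The likelihood `f` is unimodal with mode `k / n ≤ ε`, so on `[p_l, ε]` it is at least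
`min (f p_l) (f ε) = f ε`, and on `(p, 1]` it is at most `f p`. A feasible prior puts mass `θ`
on `[0, ε]`, all of it (a.e.) in `[p_l, ε]`, and at most `1 - θ` on `(p, 1]`; hence the posterior
mass `A` of `[0, p]` is at least `θ f(ε)`, the remaining mass `C` is at most `(1 - θ) f(p)`, and
`A / (A + C)` is at least the claimed value. The priors `θ δ_ε + (1 - θ) δ_q` are feasible for
`ε < q ≤ 1`, and their posteriors tend to that value as `q ↓ p`. -/

open Filter Topology

lemma MonotoneOn.min_le_of_antitoneOn {α β : Type*} [LinearOrder α] [LinearOrder β] {f : α → β}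
    {a b c x : α} (hmono : MonotoneOn f (Icc a c)) (hanti : AntitoneOn f (Icc c b))
    (hx : x ∈ Icc a b) : min (f a) (f b) ≤ f x := by
  rcases le_total x c with hxc | hcx
  · exact min_le_of_left_le (hmono ⟨le_rfl, hx.1.trans hxc⟩ ⟨hx.1, hxc⟩ hx.1)
  · exact min_le_of_right_le (hanti ⟨hcx, hx.2⟩ ⟨hcx.trans hx.2, le_rfl⟩ hx.2)

lemma div_add_le_div_add {a c A C : ℝ} (ha : 0 < a) (haA : a ≤ A) (hC : 0 ≤ C) (hCc : C ≤ c) :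
    a / (a + c) ≤ A / (A + C) := by
  rw [div_le_div_iff₀ (by linarith) (by linarith)]
  nlinarith

section Likelihood

variable {k n : ℕ} {x : ℝ}

@[fun_prop]
lemma continuous_likelihood (k n : ℕ) : Continuous (likelihood k n) := by
  unfold likelihood; fun_prop

lemma likelihood_nonneg (k n : ℕ) (hx : x ∈ Icc 0 1) : 0 ≤ likelihood k n x :=
  mul_nonneg (pow_nonneg hx.1 _) (pow_nonneg (sub_nonneg.2 hx.2) _)

lemma likelihood_pos (k n : ℕ) (hx : x ∈ Ioo 0 1) : 0 < likelihood k n x :=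
  mul_pos (pow_pos hx.1 _) (pow_pos (sub_pos.2 hx.2) _)

lemma likelihood_one (hkn : k < n) : likelihood k n 1 = 0 := by
  simp [likelihood, Nat.sub_ne_zero_of_lt hkn]

lemma hasDerivAt_likelihood (k n : ℕ) (x : ℝ) :
    HasDerivAt (likelihood k n)
      (k * x ^ (k - 1) * (1 - x) ^ (n - k) +
        x ^ k * ((n - k : ℕ) * (1 - x) ^ (n - k - 1) * -1)) x :=
  (hasDerivAt_pow k x).mul
    ((hasDerivAt_pow (n - k) (1 - x)).comp x ((hasDerivAt_id x).const_sub 1))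

lemma deriv_likelihood_mul (hkn : k ≤ n) (x : ℝ) :
    deriv (likelihood k n) x * (x * (1 - x)) = likelihood k n x * (k - n * x) := by
  obtain ⟨m, rfl⟩ := Nat.exists_eq_add_of_le hkn
  rw [(hasDerivAt_likelihood k (k + m) x).deriv, likelihood, Nat.add_sub_cancel_left]
  push_cast
  rcases k with _ | k <;> rcases m with _ | m <;>
    simp only [Nat.add_sub_cancel, pow_succ, Nat.cast_add, Nat.cast_one, Nat.cast_zero] <;> ring

lemma monotoneOn_likelihood (hkn : k ≤ n) (hn : 0 < n) :
    MonotoneOn (likelihood k n) (Icc 0 (k / n)) := by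
  refine monotoneOn_of_deriv_nonneg (convex_Icc _ _) (continuous_likelihood k n).continuousOn
    (fun x _ => (hasDerivAt_likelihood k n x).differentiableAt.differentiableWithinAt)
    fun x hx => ?_
  rw [interior_Icc] at hx
  have hmode : (k : ℝ) / n ≤ 1 := div_le_one_of_le₀ (by exact_mod_cast hkn) n.cast_nonneg
  have hx1 : 0 < x * (1 - x) := mul_pos hx.1 (by linarith [hx.2])
  have hnx : n * x ≤ k := (lt_div_iff₀' (by exact_mod_cast hn)).1 hx.2 |>.le
  refine nonneg_of_mul_nonneg_left ?_ hx1
  rw [deriv_likelihood_mul hkn]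
  exact mul_nonneg (likelihood_nonneg k n ⟨hx.1.le, by linarith [hx.2]⟩) (sub_nonneg.2 hnx)

lemma antitoneOn_likelihood (hkn : k ≤ n) (hn : 0 < n) :
    AntitoneOn (likelihood k n) (Icc (k / n) 1) := by
  refine antitoneOn_of_deriv_nonpos (convex_Icc _ _) (continuous_likelihood k n).continuousOn
    (fun x _ => (hasDerivAt_likelihood k n x).differentiableAt.differentiableWithinAt)
    fun x hx => ?_
  rw [interior_Icc] at hx
  have hx0 : 0 < x := lt_of_le_of_lt (by positivity) hx.1
  have hx1 : 0 < x * (1 - x) := mul_pos hx0 (by linarith [hx.2])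
  have hnx : k ≤ n * x := (div_lt_iff₀' (by exact_mod_cast hn)).1 hx.1 |>.le
  refine nonpos_of_mul_nonpos_left ?_ hx1
  rw [deriv_likelihood_mul hkn]
  exact mul_nonpos_of_nonneg_of_nonpos (likelihood_nonneg k n ⟨hx0.le, hx.2.le⟩)
    (sub_nonpos.2 hnx)

lemma likelihood_le_of_mem_Icc (hkn : k ≤ n) (hn : 0 < n) {a b : ℝ} (ha : 0 ≤ a) (hb : b ≤ 1)
    (hab : likelihood k n b ≤ likelihood k n a) (hx : x ∈ Icc a b) :
    likelihood k n b ≤ likelihood k n x :=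
  (le_min hab le_rfl).trans <|
    ((monotoneOn_likelihood hkn hn).mono (Icc_subset_Icc_left ha)).min_le_of_antitoneOn
      ((antitoneOn_likelihood hkn hn).mono (Icc_subset_Icc_right hb)) hx

end Likelihood

namespace Feasible

variable {pl ε θ : ℝ} {μ : Measure ℝ}

lemma ae_mem_Icc (h : Feasible pl ε θ μ) : ∀ᵐ x ∂μ, x ∈ Icc pl 1 := by
  have : IsProbabilityMeasure μ := h.1
  exact (ae_iff_measure_eq measurableSet_Icc.nullMeasurableSet).2 (h.2.2.trans measure_univ.symm)

lemma measureReal_Icc_zero (h : Feasible pl ε θ μ) (hθ : 0 ≤ θ) : μ.real (Icc 0 ε) = θ := by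
  rw [measureReal_def, h.2.1, ENNReal.toReal_ofReal hθ]

lemma measureReal_le_of_disjoint (h : Feasible pl ε θ μ) {s : Set ℝ} (hs : MeasurableSet s)
    (hd : Disjoint (Icc 0 ε) s) : μ.real s ≤ 1 - θ := by
  have : IsProbabilityMeasure μ := h.1
  have hθ : μ.real (Icc 0 ε) = max θ 0 := by rw [measureReal_def, h.2.1, ENNReal.toReal_ofReal']
  have hunion := measureReal_union (μ := μ) hd hs
  linarith [le_max_left θ 0, measureReal_le_one (μ := μ) (s := Icc 0 ε ∪ s)]

lemma mul_le_setIntegral_Icc_zero (h : Feasible pl ε θ μ) (hθ : 0 ≤ θ) {g : ℝ → ℝ} {c : ℝ}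
    (hg : IntegrableOn g (Icc 0 ε) μ) (hc : ∀ x ∈ Icc pl ε, c ≤ g x) :
    θ * c ≤ ∫ x in Icc 0 ε, g x ∂μ := by
  have : IsProbabilityMeasure μ := h.1
  calc θ * c = ∫ _ in Icc 0 ε, c ∂μ := by
        rw [setIntegral_const, h.measureReal_Icc_zero hθ, smul_eq_mul]
    _ ≤ ∫ x in Icc 0 ε, g x ∂μ := by
        refine setIntegral_mono_on_ae (integrableOn_const (measure_ne_top _ _)) hg
          measurableSet_Icc ?_
        filter_upwards [h.ae_mem_Icc] with x hx hx'
        exact hc x ⟨hx.1, hx'.2⟩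

lemma setIntegral_Ioc_le_mul (h : Feasible pl ε θ μ) {q : ℝ} (hεq : ε < q) {g : ℝ → ℝ} {c : ℝ}
    (hg : IntegrableOn g (Ioc q 1) μ) (hgc : ∀ x ∈ Ioc q 1, g x ≤ c) (hc : 0 ≤ c) :
    ∫ x in Ioc q 1, g x ∂μ ≤ (1 - θ) * c := by
  have : IsProbabilityMeasure μ := h.1
  have hd : Disjoint (Icc 0 ε) (Ioc q 1) :=
    disjoint_left.2 fun x hx hx' => (hx.2.trans_lt hεq).not_ge hx'.1.le
  calc ∫ x in Ioc q 1, g x ∂μ ≤ ∫ _ in Ioc q 1, c ∂μ :=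
        setIntegral_mono_on hg (integrableOn_const (measure_ne_top _ _)) measurableSet_Ioc hgc
    _ = μ.real (Ioc q 1) * c := by rw [setIntegral_const, smul_eq_mul]
    _ ≤ (1 - θ) * c :=
        mul_le_mul_of_nonneg_right (h.measureReal_le_of_disjoint measurableSet_Ioc hd) hc

end Feasible

section Posterior

variable {k n : ℕ} {p : ℝ}

lemma posterior_eq_div_add (μ : Measure ℝ) [IsFiniteMeasure μ] (hp0 : 0 ≤ p) (hp1 : p ≤ 1) :
    posterior k n μ p = (∫ x in Icc 0 p, likelihood k n x ∂μ) /
      ((∫ x in Icc 0 p, likelihood k n x ∂μ) + ∫ x in Ioc p 1, likelihood k n x ∂μ) := by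
  have hint := (continuous_likelihood k n).integrableOn_Icc (μ := μ) (a := 0) (b := 1)
  rw [posterior, ← Icc_union_Ioc_eq_Icc hp0 hp1, setIntegral_union
    (disjoint_left.2 fun x hx hx' => hx'.1.not_ge hx.2) measurableSet_Ioc
    (hint.mono_set (Icc_subset_Icc_right hp1)) (hint.mono_set (Ioc_subset_Icc_self.trans
      (Icc_subset_Icc_left hp0)))]

lemma setIntegral_likelihood_nonneg (μ : Measure ℝ) {s : Set ℝ} (hs : MeasurableSet s)
    (hs01 : s ⊆ Icc 0 1) : 0 ≤ ∫ x in s, likelihood k n x ∂μ :=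
  setIntegral_nonneg hs fun _ hx => likelihood_nonneg k n (hs01 hx)

lemma posterior_le_one (μ : Measure ℝ) [IsFiniteMeasure μ] (hp1 : p ≤ 1) :
    posterior k n μ p ≤ 1 := by
  refine div_le_one_of_le₀ (setIntegral_mono_set
    (continuous_likelihood k n).integrableOn_Icc ?_ ?_)
    (setIntegral_likelihood_nonneg μ measurableSet_Icc subset_rfl)
  · exact (ae_restrict_iff' measurableSet_Icc).2
      (ae_of_all _ fun x hx => likelihood_nonneg k n hx)
  · exact (Icc_subset_Icc_right hp1).eventuallyLE

lemma Feasible.div_le_posterior {pl ε θ : ℝ} {μ : Measure ℝ} (h : Feasible pl ε θ μ)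
    (hθ : 0 < θ) (hε0 : 0 ≤ ε) (hεp : ε < p) (hp1 : p ≤ 1) (hfε : 0 < likelihood k n ε)
    (hge : ∀ x ∈ Icc pl ε, likelihood k n ε ≤ likelihood k n x)
    (hle : ∀ x ∈ Ioc p 1, likelihood k n x ≤ likelihood k n p) :
    θ * likelihood k n ε / (θ * likelihood k n ε + (1 - θ) * likelihood k n p) ≤
      posterior k n μ p := by
  have : IsProbabilityMeasure μ := h.1
  have hp0 : 0 ≤ p := hε0.trans hεp.le
  have hint := (continuous_likelihood k n).integrableOn_Icc (μ := μ) (a := 0) (b := 1)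
  have hIoc : Ioc p 1 ⊆ Icc 0 1 := Ioc_subset_Icc_self.trans (Icc_subset_Icc_left hp0)
  rw [posterior_eq_div_add μ hp0 hp1]
  refine div_add_le_div_add (mul_pos hθ hfε) ?_
    (setIntegral_likelihood_nonneg μ measurableSet_Ioc hIoc)
    (h.setIntegral_Ioc_le_mul hεp (hint.mono_set hIoc) hle (likelihood_nonneg k n ⟨hp0, hp1⟩))
  calc θ * likelihood k n ε ≤ ∫ x in Icc 0 ε, likelihood k n x ∂μ :=
        h.mul_le_setIntegral_Icc_zero hθ.le (hint.mono_set (Icc_subset_Icc_right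
          (hεp.le.trans hp1))) hge
    _ ≤ ∫ x in Icc 0 p, likelihood k n x ∂μ :=
        setIntegral_mono_set (hint.mono_set (Icc_subset_Icc_right hp1))
          ((ae_restrict_iff' measurableSet_Icc).2 (ae_of_all _ fun x hx =>
            likelihood_nonneg k n ⟨hx.1, hx.2.trans hp1⟩))
          (Icc_subset_Icc_right hεp.le).eventuallyLE

end Posterior

noncomputable def twoPointPrior (θ ε q : ℝ) : Measure ℝ :=
  ENNReal.ofReal θ • Measure.dirac ε + ENNReal.ofReal (1 - θ) • Measure.dirac q

section TwoPointPrior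

variable {k n : ℕ} {pl ε θ p q : ℝ}

lemma twoPointPrior_apply (s : Set ℝ) :
    twoPointPrior θ ε q s =
      ENNReal.ofReal θ * s.indicator 1 ε + ENNReal.ofReal (1 - θ) * s.indicator 1 q := by
  simp [twoPointPrior, Measure.dirac_apply]

lemma feasible_twoPointPrior (hθ0 : 0 ≤ θ) (hθ1 : θ ≤ 1) (hε0 : 0 ≤ ε) (hplε : pl ≤ ε)
    (hεq : ε < q) (hq1 : q ≤ 1) : Feasible pl ε θ (twoPointPrior θ ε q) := by
  have hmass : ENNReal.ofReal θ + ENNReal.ofReal (1 - θ) = 1 := by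
    rw [← ENNReal.ofReal_add hθ0 (sub_nonneg.2 hθ1), add_sub_cancel, ENNReal.ofReal_one]
  refine ⟨⟨?_⟩, ?_, ?_⟩ <;> rw [twoPointPrior_apply]
  · simpa using hmass
  · simp [indicator_of_mem (show ε ∈ Icc 0 ε from ⟨hε0, le_rfl⟩),
      indicator_of_notMem (show q ∉ Icc 0 ε from fun h => h.2.not_gt hεq)]
  · simp [indicator_of_mem (show ε ∈ Icc pl 1 from ⟨hplε, hεq.le.trans hq1⟩),
      indicator_of_mem (show q ∈ Icc pl 1 from ⟨hplε.trans hεq.le, hq1⟩), hmass]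

lemma setIntegral_twoPointPrior (hθ0 : 0 ≤ θ) (hθ1 : θ ≤ 1) (g : ℝ → ℝ) (s : Set ℝ) :
    ∫ x in s, g x ∂twoPointPrior θ ε q = θ * s.indicator g ε + (1 - θ) * s.indicator g q := by
  classical
  rw [twoPointPrior, Measure.restrict_add, integral_add_measure, Measure.restrict_smul,
    Measure.restrict_smul, integral_smul_measure, integral_smul_measure, setIntegral_dirac,
    setIntegral_dirac, ENNReal.toReal_ofReal hθ0, ENNReal.toReal_ofReal (sub_nonneg.2 hθ1)]
  · simp [indicator_apply]
  all_goals exact ((integrable_dirac enorm_lt_top).smul_measure ENNReal.ofReal_ne_top).restrict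

lemma posterior_twoPointPrior (hθ0 : 0 ≤ θ) (hθ1 : θ ≤ 1) (hε0 : 0 ≤ ε) (hεp : ε ≤ p)
    (hpq : p < q) (hq1 : q ≤ 1) :
    posterior k n (twoPointPrior θ ε q) p =
      θ * likelihood k n ε / (θ * likelihood k n ε + (1 - θ) * likelihood k n q) := by
  rw [posterior, setIntegral_twoPointPrior hθ0 hθ1, setIntegral_twoPointPrior hθ0 hθ1,
    indicator_of_mem (show ε ∈ Icc 0 p from ⟨hε0, hεp⟩),
    indicator_of_notMem (show q ∉ Icc 0 p from fun h => h.2.not_gt hpq),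
    indicator_of_mem (show ε ∈ Icc 0 1 from ⟨hε0, hεp.trans (hpq.le.trans hq1)⟩),
    indicator_of_mem (show q ∈ Icc 0 1 from ⟨hε0.trans (hεp.trans hpq.le), hq1⟩), mul_zero,
    add_zero]

lemma tendsto_posterior_twoPointPrior (hθ0 : 0 ≤ θ) (hθ1 : θ ≤ 1) (hε0 : 0 ≤ ε) (hεp : ε ≤ p)
    (hp1 : p < 1) (hden : θ * likelihood k n ε + (1 - θ) * likelihood k n p ≠ 0) :
    Tendsto (fun q => posterior k n (twoPointPrior θ ε q) p) (𝓝[>] p)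
      (𝓝 (θ * likelihood k n ε / (θ * likelihood k n ε + (1 - θ) * likelihood k n p))) := by
  have hcont : ContinuousAt (fun q => θ * likelihood k n ε /
      (θ * likelihood k n ε + (1 - θ) * likelihood k n q)) p := by
    have := continuous_likelihood k n
    exact ContinuousAt.div (by fun_prop) (by fun_prop) hden
  refine (hcont.tendsto.mono_left nhdsWithin_le_nhds).congr' ?_
  filter_upwards [Ioc_mem_nhdsGT hp1] with q hq
  exact (posterior_twoPointPrior hθ0 hθ1 hε0 hεp hq.1 hq.2).symm

end TwoPointPrior

theorem stmt_3_general (k n : ℕ) (hn : 1 ≤ n) (pl ε θ p : ℝ)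
    (hpl : 0 < pl) (hple : pl < ε) (hε1 : ε < 1)
    (hθ0 : 0 < θ) (hθ1 : θ ≤ 1)
    (hk2 : (k : ℝ) ≤ n * ε)
    (hlik : ε ^ k * (1 - ε) ^ (n - k) ≤ pl ^ k * (1 - pl) ^ (n - k))
    (hεp : ε < p) (hp1 : p ≤ 1) :
    sInf {y : ℝ | ∃ μ : Measure ℝ, Feasible pl ε θ μ ∧ posterior k n μ p = y} =
      θ * likelihood k n ε /
        (θ * likelihood k n ε + (1 - θ) * likelihood k n p) := by
  have hε0 : 0 < ε := hpl.trans hple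
  have hkn : k < n := by
    exact_mod_cast hk2.trans_lt (mul_lt_of_lt_one_right (by exact_mod_cast hn) hε1)
  have hmode : (k : ℝ) / n ≤ ε := (div_le_iff₀' (by exact_mod_cast hn)).2 hk2
  have hfε : 0 < likelihood k n ε := likelihood_pos k n ⟨hε0, hε1⟩
  have hden : 0 < θ * likelihood k n ε + (1 - θ) * likelihood k n p :=
    add_pos_of_pos_of_nonneg (mul_pos hθ0 hfε)
      (mul_nonneg (sub_nonneg.2 hθ1) (likelihood_nonneg k n ⟨(hε0.trans hεp).le, hp1⟩))
  set S := {y : ℝ | ∃ μ : Measure ℝ, Feasible pl ε θ μ ∧ posterior k n μ p = y}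
  have hlower : θ * likelihood k n ε / (θ * likelihood k n ε + (1 - θ) * likelihood k n p) ∈
      lowerBounds S := by
    rintro _ ⟨μ, hμ, rfl⟩
    exact hμ.div_le_posterior hθ0 hε0.le hεp hp1 hfε
      (fun x => likelihood_le_of_mem_Icc hkn.le hn hpl.le hε1.le hlik)
      fun x hx => antitoneOn_likelihood hkn.le hn ⟨hmode.trans hεp.le, hp1⟩
        ⟨hmode.trans (hεp.trans hx.1).le, hx.2⟩ hx.1.le
  have hfeas {q : ℝ} (hεq : ε < q) (hq1 : q ≤ 1) : Feasible pl ε θ (twoPointPrior θ ε q) :=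
    feasible_twoPointPrior hθ0.le hθ1 hε0.le hple.le hεq hq1
  refine le_antisymm ?_ (le_csInf ⟨_, _, hfeas hε1 le_rfl, rfl⟩ hlower)
  rcases hp1.lt_or_eq with hp1 | rfl
  · refine ge_of_tendsto
      (tendsto_posterior_twoPointPrior hθ0.le hθ1 hε0.le hεp.le hp1 hden.ne') ?_
    filter_upwards [Ioc_mem_nhdsGT hp1] with q hq
    exact csInf_le ⟨_, hlower⟩ ⟨_, hfeas (hεp.trans hq.1) hq.2, rfl⟩
  · rw [likelihood_one hkn, mul_zero, add_zero, div_self (mul_pos hθ0 hfε).ne']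
    have : IsProbabilityMeasure (twoPointPrior θ ε 1) := (hfeas hε1 le_rfl).1
    exact (csInf_le ⟨_, hlower⟩ ⟨_, hfeas hε1 le_rfl, rfl⟩).trans (posterior_le_one _ le_rfl)

theorem stmt_3 (k n : ℕ) (hkn : k ≤ n) (hn : 1 ≤ n) (pl ε θ p : ℝ)
    (hpl : 0 < pl) (hple : pl < ε) (hε1 : ε < 1)
    (hθ0 : 0 < θ) (hθ1 : θ ≤ 1)
    (hk1 : (n : ℝ) * pl < k) (hk2 : (k : ℝ) ≤ n * ε)
    (hlik : ε ^ k * (1 - ε) ^ (n - k) ≤ pl ^ k * (1 - pl) ^ (n - k))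
    (hεp : ε < p) (hp1 : p ≤ 1) :
    sInf {y : ℝ | ∃ μ : Measure ℝ, Feasible pl ε θ μ ∧ posterior k n μ p = y} =
      θ * likelihood k n ε /
        (θ * likelihood k n ε + (1 - θ) * likelihood k n p) :=
  stmt_3_general k n hn pl ε θ p hpl hple hε1 hθ0 hθ1 hk2 hlik hεp hp1
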